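/- arXiv:1909.13837 — 6 statements merged into one kernel-verified Lean document; each statement's English description precedes it below -/
import Mathlib

section
/- (Exactness of the memory reduction, S = 2.) Suppose a12 ≠ 0, c ∈ ℝ, and x1 : ℝ → ℝ is continuously differentiable with x1(t) > 0 for all t ≥ 0. Define y(t) := (1/a12)·((ẋ1(t) − b1·x1(t))/x1(t) − a11·x1(t)) and χ(t) := c + ∫₀ᵗ [b2·y(τ) + (a21·x1(τ) + a22·y(τ))·y(τ)] dτ, and suppose x1 satisfies the reduced equation ẋ1(t) = b1·x1(t) + (a11·x1(t) + a12·χ(t))·x1(t) for all t ≥ 0. Then χ = y on [0,∞), the function x2 := χ is differentiable on [0,∞) with x2(0) = c, and the pair (x1, x2) solves the full 2-species GLV system on [0,∞). -/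
/-!
Dividing the reduced equation by `x1 > 0` shows that the reconstructed partner `y` is exactly the
memory term `χ`. The integrand of `χ` is continuous on `[0,∞)`, since `y` is built from `x1`, `ẋ1`
and `1 / x1`, so by the fundamental theorem of calculus `χ` has derivative
`b2·y + (a21·x1 + a22·y)·y` there; substituting `y = χ` gives the second GLV equation.
-/

open Set intervalIntegral

theorem hasDerivWithinAt_integral_Ici {E : Type*} [NormedAddCommGroup E] [NormedSpace ℝ E]
    [CompleteSpace E] {f : ℝ → E} {a t : ℝ} (hf : ContinuousOn f (Ici a)) (ht : a ≤ t) :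
    HasDerivWithinAt (fun u => ∫ x in a..u, f x) (f t) (Ici a) t := by
  -- `f ∘ max a` is a continuous extension of `f|[a,∞)` to the whole line.
  have hg : Continuous fun x => f (max a x) :=
    hf.comp_continuous (continuous_const.max continuous_id) fun x => le_max_left a x
  have hgf : EqOn (fun x => f (max a x)) f (Ici a) := fun x hx => by
    simp only [max_eq_right (mem_Ici.mp hx)]
  have h := (hg.integral_hasStrictDerivAt a t).hasDerivAt.hasDerivWithinAt (s := Ici a)
  rw [max_eq_right ht] at h
  refine h.congr_of_mem (fun u hu => integral_congr fun x hx => (hgf ?_).symm) ht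
  rw [uIcc_of_le hu] at hx
  exact hx.1

theorem one_div_mul_sub_eq_of_glv {b a11 a12 x z d : ℝ} (ha12 : a12 ≠ 0) (hx : x ≠ 0)
    (hd : d = b * x + (a11 * x + a12 * z) * x) :
    1 / a12 * ((d - b * x) / x - a11 * x) = z := by
  rw [hd]
  field_simp
  ring

/-- (Exactness of the memory reduction, `S = 2`.) If `x1` is continuously
differentiable, positive on `[0,∞)`, and satisfies the reduced equation built from the memory
term `χ(t) = c + ∫₀ᵗ [b2·y + (a21·x1 + a22·y)·y]` with
`y(t) = (1/a12)·((ẋ1(t) − b1·x1(t))/x1(t) − a11·x1(t))` and `a12 ≠ 0`, then `χ = y` on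
`[0,∞)`, the function `x2 := χ` is differentiable on `[0,∞)` with `x2 0 = c`, and the pair
`(x1, x2)` solves the full 2-species GLV system on `[0,∞)`. -/
theorem glv2_memory_reduction_exact
    (b1 b2 a11 a12 a21 a22 c : ℝ) (ha12 : a12 ≠ 0)
    (x1 : ℝ → ℝ) (hx1 : ContDiff ℝ 1 x1)
    (hpos1 : ∀ t : ℝ, 0 ≤ t → 0 < x1 t)
    (y χ : ℝ → ℝ)
    (hy : ∀ t : ℝ, y t = (1 / a12) * ((deriv x1 t - b1 * x1 t) / x1 t - a11 * x1 t))
    (hχ : ∀ t : ℝ, χ t = c + ∫ τ in (0:ℝ)..t, (b2 * y τ + (a21 * x1 τ + a22 * y τ) * y τ))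
    (hred : ∀ t : ℝ, 0 ≤ t →
      deriv x1 t = b1 * x1 t + (a11 * x1 t + a12 * χ t) * x1 t) :
    (∀ t : ℝ, 0 ≤ t → χ t = y t) ∧
    DifferentiableOn ℝ χ (Set.Ici 0) ∧
    χ 0 = c ∧
    (∀ t : ℝ, 0 ≤ t →
      deriv x1 t = b1 * x1 t + (a11 * x1 t + a12 * χ t) * x1 t) ∧
    (∀ t : ℝ, 0 ≤ t →
      HasDerivWithinAt χ (b2 * χ t + (a21 * x1 t + a22 * χ t) * χ t) (Set.Ici 0) t) := by
  have hχy : ∀ t, 0 ≤ t → χ t = y t := fun t ht => by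
    rw [hy t, one_div_mul_sub_eq_of_glv ha12 (hpos1 t ht).ne' (hred t ht)]
  have hx1c := hx1.continuous
  have hyc : ContinuousOn y (Ici 0) := by
    have hdc := hx1.continuous_deriv le_rfl
    rw [show y = _ from funext hy]
    fun_prop (disch := exact fun t ht => (hpos1 t ht).ne')
  have hderiv : ∀ t, 0 ≤ t →
      HasDerivWithinAt χ (b2 * y t + (a21 * x1 t + a22 * y t) * y t) (Ici 0) t := fun t ht =>
    ((hasDerivWithinAt_integral_Ici (by fun_prop) ht).const_add c).congr (fun u _ => hχ u) (hχ t)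
  refine ⟨hχy, fun t ht => (hderiv t ht).differentiableWithinAt, by simp [hχ], hred,
    fun t ht => ?_⟩
  simpa only [hχy t ht] using hderiv t ht
end

section
/- (Reduction from S to S−1 equations.) Let S ≥ 2 and suppose A₁S ≠ 0 and x₁, …, x_S : ℝ → ℝ are continuously differentiable and solve the S-species GLV system on [0,∞) with xᵢ(t) > 0 for all i and all t ≥ 0. Define χ_S(t) := x_S(0) + ∫₀ᵗ [b_S·y_S(τ) + (Σ_{j=1}^{S−1} A_{Sj}·xⱼ(τ) + A_{SS}·y_S(τ))·y_S(τ)] dτ. Then for every i = 1, …, S−1 and every t ≥ 0: ẋᵢ(t) = bᵢ·xᵢ(t) + (Σ_{j=1}^{S−1} Aᵢⱼ·xⱼ(t) + A_{iS}·χ_S(t))·xᵢ(t). -/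
/-- (Reduction from `S` to `S−1` equations.) For the `S`-species GLV system
with `A 1 S ≠ 0` and positive continuously differentiable solutions on `[0,∞)`, each of the
first `S−1` species satisfies the reduced equation in which `x S` is replaced by the memory
term `χ_S`. -/
theorem glvS_reduction_to_Sm1
    (S : ℕ) (hS : 2 ≤ S) (b : ℕ → ℝ) (A : ℕ → ℕ → ℝ) (hA1S : A 1 S ≠ 0)
    (x : ℕ → ℝ → ℝ)
    (hdiff : ∀ i ∈ Finset.Icc 1 S, ContDiff ℝ 1 (x i))
    (hpos : ∀ i ∈ Finset.Icc 1 S, ∀ t : ℝ, 0 ≤ t → 0 < x i t)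
    (hode : ∀ i ∈ Finset.Icc 1 S, ∀ t : ℝ, 0 ≤ t →
      deriv (x i) t = b i * x i t + (∑ j ∈ Finset.Icc 1 S, A i j * x j t) * x i t)
    (yS χS : ℝ → ℝ)
    (hyS : ∀ t : ℝ, yS t = (1 / A 1 S) * ((deriv (x 1) t - b 1 * x 1 t) / x 1 t
      - ∑ j ∈ Finset.Icc 1 (S - 1), A 1 j * x j t))
    (hχS : ∀ t : ℝ, χS t = x S 0 + ∫ τ in (0:ℝ)..t,
      (b S * yS τ + ((∑ j ∈ Finset.Icc 1 (S - 1), A S j * x j τ) + A S S * yS τ) * yS τ)) :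
    ∀ i ∈ Finset.Icc 1 (S - 1), ∀ t : ℝ, 0 ≤ t →
      deriv (x i) t
        = b i * x i t + ((∑ j ∈ Finset.Icc 1 (S - 1), A i j * x j t) + A i S * χS t) * x i t := by
  have hS1 : 1 ≤ S := le_trans (by norm_num) hS
  have h1mem : (1 : ℕ) ∈ Finset.Icc 1 S := Finset.mem_Icc.mpr ⟨le_refl 1, hS1⟩
  have hSmem : S ∈ Finset.Icc 1 S := Finset.mem_Icc.mpr ⟨hS1, le_refl S⟩
  -- splitting the sum
  have hsplit : ∀ (g : ℕ → ℝ),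
      ∑ j ∈ Finset.Icc 1 S, g j = (∑ j ∈ Finset.Icc 1 (S - 1), g j) + g S := by
    intro g
    have h : S - 1 + 1 = S := Nat.succ_pred_eq_of_pos (lt_of_lt_of_le (by norm_num) hS1)
    have := Finset.sum_Icc_succ_top (a := 1) (b := S - 1)
      (by omega : 1 ≤ S - 1 + 1) g
    rw [h] at this
    rw [this]
  -- yS equals x S on [0,∞)
  have hySx : ∀ t : ℝ, 0 ≤ t → yS t = x S t := by
    intro t ht
    have hx1 : x 1 t ≠ 0 := ne_of_gt (hpos 1 h1mem t ht)
    have hode1 := hode 1 h1mem t ht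
    rw [hyS t, hode1, hsplit (fun j => A 1 j * x j t)]
    field_simp
    ring
  -- χS equals x S on [0,∞)
  have hχx : ∀ t : ℝ, 0 ≤ t → χS t = x S t := by
    intro t ht
    have hcd := hdiff S hSmem
    have hcongr : ∀ τ ∈ Set.uIcc (0:ℝ) t,
        (b S * yS τ + ((∑ j ∈ Finset.Icc 1 (S - 1), A S j * x j τ) + A S S * yS τ) * yS τ)
          = deriv (x S) τ := by
      intro τ hτ
      rw [Set.uIcc_of_le ht] at hτ
      have hτ0 : 0 ≤ τ := hτ.1
      rw [hySx τ hτ0, hode S hSmem τ hτ0, hsplit (fun j => A S j * x j τ)]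
    have hint : (∫ τ in (0:ℝ)..t,
        (b S * yS τ + ((∑ j ∈ Finset.Icc 1 (S - 1), A S j * x j τ) + A S S * yS τ) * yS τ))
          = ∫ τ in (0:ℝ)..t, deriv (x S) τ :=
      intervalIntegral.integral_congr hcongr
    have hftc : (∫ τ in (0:ℝ)..t, deriv (x S) τ) = x S t - x S 0 :=
      intervalIntegral.integral_deriv_eq_sub
        (fun τ _ => (hcd.differentiable one_ne_zero) τ)
        ((hcd.continuous_deriv le_rfl).intervalIntegrable 0 t)
    rw [hχS t, hint, hftc]
    ring
  intro i hi t ht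
  have hi' : i ∈ Finset.Icc 1 S := by
    rw [Finset.mem_Icc] at hi ⊢
    exact ⟨hi.1, le_trans hi.2 (Nat.sub_le S 1)⟩
  rw [hode i hi' t ht, hsplit (fun j => A i j * x j t), hχx t ht]
end

section
/- (Exactness of the memory reduction, S to S−1.) Let S ≥ 2, A₁S ≠ 0, c ∈ ℝ, and suppose x₁, …, x_{S−1} : ℝ → ℝ are continuously differentiable with xᵢ(t) > 0 for all i = 1,…,S−1 and all t ≥ 0. Define y_S(t) := (1/A₁S)·((ẋ₁(t) − b₁·x₁(t))/x₁(t) − Σ_{j=1}^{S−1} A₁ⱼ·xⱼ(t)) and χ_S(t) := c + ∫₀ᵗ [b_S·y_S(τ) + (Σ_{j=1}^{S−1} A_{Sj}·xⱼ(τ) + A_{SS}·y_S(τ))·y_S(τ)] dτ, and suppose that for every i = 1, …, S−1 and t ≥ 0: ẋᵢ(t) = bᵢ·xᵢ(t) + (Σ_{j=1}^{S−1} Aᵢⱼ·xⱼ(t) + A_{iS}·χ_S(t))·xᵢ(t). Then χ_S = y_S on [0,∞), the function x_S := χ_S is differentiable on [0,∞) with x_S(0) = c, and x₁, …, x_S solve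 the full S-species GLV system on [0,∞). -/
/-! Solving the reduced equation for `x₁` for the memory term (possible as `x₁ > 0` and
`A₁S ≠ 0`) gives exactly `χ_S = y_S` on `[0,∞)`. As the `xᵢ` are `C¹` and `x₁ > 0`, the integrand
of `χ_S` is continuous on `[0,∞)`, so by the fundamental theorem of calculus its derivative there
is the integrand at `t`; replacing `y_S` by `χ_S` in it gives the `S`-th GLV equation. -/

open Set

theorem hasDerivWithinAt_intervalIntegral_Ici {E : Type*} [NormedAddCommGroup E]
    [NormedSpace ℝ E] [CompleteSpace E] {g : ℝ → E} {a t : ℝ}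
    (hg : ContinuousOn g (Ici a)) (ht : a ≤ t) :
    HasDerivWithinAt (fun u => ∫ τ in a..u, g τ) (g t) (Ici a) t := by
  -- `𝓝[Ici a] t` has no `FTCFilter` instance, but `𝓝[Icc a (t + 1)] t` does.
  have hg' : ContinuousOn g (Icc a (t + 1)) := hg.mono Icc_subset_Ici_self
  have : Fact (t ∈ Icc a (t + 1)) := ⟨⟨ht, by linarith⟩⟩
  have hIcc : HasDerivWithinAt (fun u => ∫ τ in a..u, g τ) (g t) (Icc a (t + 1)) t :=
    intervalIntegral.integral_hasDerivWithinAt_right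
      ((hg'.mono (Icc_subset_Icc_right (by linarith))).intervalIntegrable_of_Icc ht)
      (hg'.stronglyMeasurableAtFilter_nhdsWithin measurableSet_Icc t) (hg' t Fact.out)
  refine hIcc.mono_of_mem_nhdsWithin ?_
  rw [← Ici_inter_Iic]
  exact inter_mem_nhdsWithin _ (Iic_mem_nhds (by linarith))

theorem eq_of_glv_rate_eq {d u β σ α χ : ℝ} (h : d = β * u + (σ + α * χ) * u) (hu : u ≠ 0)
    (hα : α ≠ 0) : χ = 1 / α * ((d - β * u) / u - σ) := by
  rw [h]
  field_simp
  ring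

/-- (Exactness of the memory reduction, `S` to `S−1`.) If `x 1, …, x (S-1)`
are continuously differentiable, positive on `[0,∞)`, and satisfy the reduced `S−1`-species
system built from the memory term `χ_S`, then `χ_S = y_S` on `[0,∞)`, the function
`x S := χ_S` is differentiable on `[0,∞)` with initial value `c`, and together the `S`
functions solve the full `S`-species GLV system on `[0,∞)`. -/
theorem glvS_memory_reduction_exact
    (S : ℕ) (hS : 2 ≤ S) (b : ℕ → ℝ) (A : ℕ → ℕ → ℝ) (c : ℝ) (hA1S : A 1 S ≠ 0)
    (x : ℕ → ℝ → ℝ)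
    (hdiff : ∀ i ∈ Finset.Icc 1 (S - 1), ContDiff ℝ 1 (x i))
    (hpos : ∀ i ∈ Finset.Icc 1 (S - 1), ∀ t : ℝ, 0 ≤ t → 0 < x i t)
    (yS χS : ℝ → ℝ)
    (hyS : ∀ t : ℝ, yS t = (1 / A 1 S) * ((deriv (x 1) t - b 1 * x 1 t) / x 1 t
      - ∑ j ∈ Finset.Icc 1 (S - 1), A 1 j * x j t))
    (hχS : ∀ t : ℝ, χS t = c + ∫ τ in (0:ℝ)..t,
      (b S * yS τ + ((∑ j ∈ Finset.Icc 1 (S - 1), A S j * x j τ) + A S S * yS τ) * yS τ))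
    (hred : ∀ i ∈ Finset.Icc 1 (S - 1), ∀ t : ℝ, 0 ≤ t →
      deriv (x i) t
        = b i * x i t + ((∑ j ∈ Finset.Icc 1 (S - 1), A i j * x j t) + A i S * χS t) * x i t) :
    (∀ t : ℝ, 0 ≤ t → χS t = yS t) ∧
    DifferentiableOn ℝ χS (Set.Ici 0) ∧
    χS 0 = c ∧
    (∀ i ∈ Finset.Icc 1 (S - 1), ∀ t : ℝ, 0 ≤ t →
      deriv (x i) t
        = b i * x i t + ((∑ j ∈ Finset.Icc 1 (S - 1), A i j * x j t) + A i S * χS t) * x i t) ∧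
    (∀ t : ℝ, 0 ≤ t →
      HasDerivWithinAt χS
        (b S * χS t + ((∑ j ∈ Finset.Icc 1 (S - 1), A S j * x j t) + A S S * χS t) * χS t)
        (Set.Ici 0) t) := by
  have h1 : 1 ∈ Finset.Icc 1 (S - 1) := Finset.mem_Icc.2 ⟨le_rfl, by omega⟩
  have hχy : ∀ t, 0 ≤ t → χS t = yS t := fun t ht => by
    rw [hyS]
    exact eq_of_glv_rate_eq (hred 1 h1 t ht) (hpos 1 h1 t ht).ne' hA1S
  have hsum : ∀ k, Continuous fun t => ∑ j ∈ Finset.Icc 1 (S - 1), A k j * x j t := fun k =>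
    continuous_finsetSum _ fun j hj => continuous_const.mul (hdiff j hj).continuous
  have hy : ContinuousOn yS (Ici 0) := by
    have hx1 : Continuous (x 1) := (hdiff 1 h1).continuous
    have hx1' : Continuous (deriv (x 1)) := (hdiff 1 h1).continuous_deriv le_rfl
    rw [funext hyS]
    exact continuousOn_const.mul <| ((hx1'.sub (continuous_const.mul hx1)).continuousOn.div
      hx1.continuousOn fun t ht => (hpos 1 h1 t ht).ne').sub (hsum 1).continuousOn
  have hderiv : ∀ t, 0 ≤ t → HasDerivWithinAt χS
      (b S * yS t + ((∑ j ∈ Finset.Icc 1 (S - 1), A S j * x j t) + A S S * yS t) * yS t)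
      (Ici 0) t := fun t ht => by
    rw [funext hχS]
    refine (hasDerivWithinAt_intervalIntegral_Ici ?_ ht).const_add c
    exact (continuousOn_const.mul hy).add
      (((hsum S).continuousOn.add (continuousOn_const.mul hy)).mul hy)
  refine ⟨hχy, fun t ht => (hderiv t ht).differentiableWithinAt, by simp [hχS], hred,
    fun t ht => ?_⟩
  rw [hχy t ht]
  exact hderiv t ht
end

section
/- (Algebraic reduction, S to S−1.) Let S ≥ 2 and suppose A₁S ≠ 0 and x₁, …, x_S : ℝ → ℝ are differentiable and solve the S-species GLV system on [0,∞) with xᵢ(t) > 0 for all i and all t ≥ 0. Then x₁ is twice differentiable on [0,∞), the function y_S is differentiable on [0,∞), and y_S satisfies ẏ_S(t) = b_S·y_S(t) + (Σ_{j=1}^{S−1} A_{Sj}·xⱼ(t) + A_{SS}·y_S(t))·y_S(t) for all t ≥ 0. -/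
/-!
On `[0,∞)` the equation for species `1` says that the per-capita growth rate
`(ẋ₁ - b₁ x₁) / x₁` equals `∑_{j ≤ S} A₁ⱼ xⱼ`, so removing the first `S - 1` terms and dividing
by `A₁S` leaves exactly `x_S`. Hence `y_S = x_S` on `[0,∞)`, and the equation for `y_S` is the
equation for species `S` with its last interaction term split off.
-/

open Finset

theorem Finset.sum_Icc_one_eq_sum_Icc_sub_one_add {M : Type*} [AddCommMonoid M] {S : ℕ}
    (hS : 1 ≤ S) (f : ℕ → M) :
    ∑ j ∈ Icc 1 S, f j = ∑ j ∈ Icc 1 (S - 1), f j + f S := by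
  obtain ⟨m, rfl⟩ := Nat.exists_eq_add_of_le' hS
  simpa using Finset.sum_Icc_succ_top (by omega) f

section GLV

variable {S : ℕ} {b : ℕ → ℝ} {A : ℕ → ℕ → ℝ}

lemma glv_reduced_eq_last (hS : 1 ≤ S) (hA : A 1 S ≠ 0) {x : ℕ → ℝ} {dx₁ : ℝ} (hx₁ : x 1 ≠ 0)
    (hode : dx₁ = b 1 * x 1 + (∑ j ∈ Icc 1 S, A 1 j * x j) * x 1) :
    1 / A 1 S * ((dx₁ - b 1 * x 1) / x 1 - ∑ j ∈ Icc 1 (S - 1), A 1 j * x j) = x S := by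
  have hrate : (dx₁ - b 1 * x 1) / x 1 = ∑ j ∈ Icc 1 S, A 1 j * x j := by
    rw [hode]
    field_simp
    ring
  rw [hrate, sum_Icc_one_eq_sum_Icc_sub_one_add hS, add_sub_cancel_left]
  field_simp

lemma differentiable_glv_rhs {x : ℕ → ℝ → ℝ} (hdiff : ∀ j ∈ Icc 1 S, Differentiable ℝ (x j))
    {i : ℕ} (hi : i ∈ Icc 1 S) :
    Differentiable ℝ fun t => b i * x i t + (∑ j ∈ Icc 1 S, A i j * x j t) * x i t :=
  ((hdiff i hi).const_mul _).add
    ((Differentiable.fun_sum fun j hj => (hdiff j hj).const_mul _).mul (hdiff i hi))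

end GLV

/-- (Algebraic reduction, `S` to `S−1`.) For the `S`-species GLV system with
`A 1 S ≠ 0` and positive differentiable solutions on `[0,∞)`, `x 1` is twice differentiable on
`[0,∞)`, `y_S` is differentiable on `[0,∞)`, and `y_S` satisfies
`ẏ_S = b_S·y_S + (Σ_{j=1}^{S−1} A_{Sj}·xⱼ + A_{SS}·y_S)·y_S` there. -/
theorem glvS_algebraic_reduction
    (S : ℕ) (hS : 2 ≤ S) (b : ℕ → ℝ) (A : ℕ → ℕ → ℝ) (hA1S : A 1 S ≠ 0)
    (x : ℕ → ℝ → ℝ)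
    (hdiff : ∀ i ∈ Finset.Icc 1 S, Differentiable ℝ (x i))
    (hpos : ∀ i ∈ Finset.Icc 1 S, ∀ t : ℝ, 0 ≤ t → 0 < x i t)
    (hode : ∀ i ∈ Finset.Icc 1 S, ∀ t : ℝ, 0 ≤ t →
      deriv (x i) t = b i * x i t + (∑ j ∈ Finset.Icc 1 S, A i j * x j t) * x i t)
    (yS : ℝ → ℝ)
    (hyS : ∀ t : ℝ, yS t = (1 / A 1 S) * ((deriv (x 1) t - b 1 * x 1 t) / x 1 t
      - ∑ j ∈ Finset.Icc 1 (S - 1), A 1 j * x j t)) :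
    DifferentiableOn ℝ (deriv (x 1)) (Set.Ici 0) ∧
    DifferentiableOn ℝ yS (Set.Ici 0) ∧
    (∀ t : ℝ, 0 ≤ t →
      HasDerivWithinAt yS
        (b S * yS t + ((∑ j ∈ Finset.Icc 1 (S - 1), A S j * x j t) + A S S * yS t) * yS t)
        (Set.Ici 0) t) := by
  have mem₁ : 1 ∈ Icc 1 S := mem_Icc.2 ⟨le_rfl, by omega⟩
  have memS : S ∈ Icc 1 S := mem_Icc.2 ⟨by omega, le_rfl⟩
  have hyS_eq : Set.EqOn yS (x S) (Set.Ici 0) := fun t ht =>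
    (hyS t).trans <| glv_reduced_eq_last (x := fun i => x i t) (by omega) hA1S
      (hpos 1 mem₁ t ht).ne' (hode 1 mem₁ t ht)
  refine ⟨(differentiable_glv_rhs hdiff mem₁).differentiableOn.congr fun t ht => hode 1 mem₁ t ht,
    (hdiff S memS).differentiableOn.congr hyS_eq, fun t ht => ?_⟩
  have hxS := ((hdiff S memS) t).hasDerivAt.hasDerivWithinAt (s := Set.Ici 0)
  rw [hode S memS t ht, sum_Icc_one_eq_sum_Icc_sub_one_add (by omega)] at hxS
  rw [hyS_eq ht]
  exact hxS.congr hyS_eq (hyS_eq ht)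
end

section
/- (Reduction from three species to one when a13 = 0.) Suppose a13 = 0, a12 ≠ 0, a23 ≠ 0, and x1, x2, x3 : ℝ → ℝ are continuously differentiable and solve the 3-species GLV system on [0,∞) with x1(t), x2(t), x3(t) > 0 for all t ≥ 0. Define y2(t) := (1/a12)·((ẋ1(t) − b1·x1(t))/x1(t) − a11·x1(t)). Then x1 is twice differentiable on [0,∞), x2 = y2 on [0,∞), y2 is differentiable, and, defining y3(t) := (1/a23)·((ẏ2(t) − b2·y2(t))/y2(t) − a21·x1(t) − a22·y2(t)), χ3(t) := x3(0) + ∫₀ᵗ [b3·y3(τ) + (a31·x1(τ) + a32·y2(τ) + a33·y3(τ))·y3(τ)] dτ, and χ2(t) := x2(0) + ∫₀ᵗ [b2·y2(τ) + (a21·x1(τ) + a22·y2(τ) + a23·χ3(τ))·y2(τ)] dτ, the function x1 satisfies the single reduced equation ẋ1(t) = b1·x1(t) + (a11·x1(t) + a12·χ2(t))·x1(t) for all t ≥ 0. -/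
/-!
With `a13 = 0` the first equation is linear in `x2`, so it can be solved for `x2`: this is
`y2 = x2`. Likewise the second equation can be solved for `x3`, which gives `y3 = x3` once the
one-sided derivative of `y2` on `[0,∞)` is identified with `ẋ2`. The integrands defining `χ3`
and `χ2` are then the right-hand sides of the third and second equations, i.e. `ẋ3` and `ẋ2`, so
the fundamental theorem of calculus gives `χ3 = x3` and `χ2 = x2`, and the first equation becomes
the reduced one.
-/

open Set

theorem eq_of_eq_rate_mul {K : Type*} [Field K] {b r c x y d : K} (hx : x ≠ 0) (hc : c ≠ 0)
    (h : d = b * x + (r + c * y) * x) : y = 1 / c * ((d - b * x) / x - r) := by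
  rw [h]
  field_simp
  ring

theorem derivWithin_eq_deriv_of_eqOn {𝕜 F : Type*} [NontriviallyNormedField 𝕜]
    [NormedAddCommGroup F] [NormedSpace 𝕜 F] {f g : 𝕜 → F} {s : Set 𝕜} {x : 𝕜} (hfg : EqOn f g s)
    (hx : x ∈ s) (hs : UniqueDiffWithinAt 𝕜 s x) (hg : DifferentiableAt 𝕜 g x) :
    derivWithin f s x = deriv g x := by
  rw [derivWithin_congr hfg (hfg hx), hg.derivWithin hs]

theorem add_integral_eq_of_eqOn_deriv {f g : ℝ → ℝ} {a b : ℝ} (hf : ContDiff ℝ 1 f)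
    (hg : EqOn g (deriv f) (uIcc a b)) : f a + ∫ x in a..b, g x = f b := by
  rw [intervalIntegral.integral_congr hg,
    intervalIntegral.integral_deriv_eq_sub (fun x _ => hf.differentiable one_ne_zero x)
      ((hf.continuous_deriv le_rfl).intervalIntegrable a b)]
  ring

theorem uIcc_subset_Ici_of_le {α : Type*} [Lattice α] {a b : α} (h : a ≤ b) :
    uIcc a b ⊆ Ici a := by
  rw [uIcc_of_le h]
  exact Icc_subset_Ici_self

theorem glv3_reduction_to_one_general
    (b1 b2 b3 a11 a12 a13 a21 a22 a23 a31 a32 a33 : ℝ)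
    (ha13 : a13 = 0) (ha12 : a12 ≠ 0) (ha23 : a23 ≠ 0)
    (x1 x2 x3 : ℝ → ℝ)
    (hx1 : ContDiff ℝ 1 x1) (hx2 : ContDiff ℝ 1 x2) (hx3 : ContDiff ℝ 1 x3)
    (hpos1 : ∀ t : ℝ, 0 ≤ t → 0 < x1 t)
    (hpos2 : ∀ t : ℝ, 0 ≤ t → 0 < x2 t)
    (hode1 : ∀ t : ℝ, 0 ≤ t →
      deriv x1 t = b1 * x1 t + (a11 * x1 t + a12 * x2 t + a13 * x3 t) * x1 t)
    (hode2 : ∀ t : ℝ, 0 ≤ t →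
      deriv x2 t = b2 * x2 t + (a21 * x1 t + a22 * x2 t + a23 * x3 t) * x2 t)
    (hode3 : ∀ t : ℝ, 0 ≤ t →
      deriv x3 t = b3 * x3 t + (a31 * x1 t + a32 * x2 t + a33 * x3 t) * x3 t)
    (y2 y3 χ3 χ2 : ℝ → ℝ)
    (hy2 : ∀ t : ℝ, y2 t = (1 / a12) * ((deriv x1 t - b1 * x1 t) / x1 t - a11 * x1 t))
    (hy3 : ∀ t : ℝ, y3 t = (1 / a23) *
      ((derivWithin y2 (Set.Ici 0) t - b2 * y2 t) / y2 t - a21 * x1 t - a22 * y2 t))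
    (hχ3 : ∀ t : ℝ, χ3 t = x3 0 + ∫ τ in (0:ℝ)..t,
      (b3 * y3 τ + (a31 * x1 τ + a32 * y2 τ + a33 * y3 τ) * y3 τ))
    (hχ2 : ∀ t : ℝ, χ2 t = x2 0 + ∫ τ in (0:ℝ)..t,
      (b2 * y2 τ + (a21 * x1 τ + a22 * y2 τ + a23 * χ3 τ) * y2 τ)) :
    DifferentiableOn ℝ (deriv x1) (Set.Ici 0) ∧
    (∀ t : ℝ, 0 ≤ t → x2 t = y2 t) ∧
    DifferentiableOn ℝ y2 (Set.Ici 0) ∧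
    (∀ t : ℝ, 0 ≤ t →
      deriv x1 t = b1 * x1 t + (a11 * x1 t + a12 * χ2 t) * x1 t) := by
  have hx1d := hx1.differentiable one_ne_zero
  have hx2d := hx2.differentiable one_ne_zero
  have hx3d := hx3.differentiable one_ne_zero
  have hy2x2 : EqOn y2 x2 (Ici 0) := fun t (ht : 0 ≤ t) => by
    rw [hy2]
    exact (eq_of_eq_rate_mul (hpos1 t ht).ne' ha12 (by rw [hode1 t ht, ha13]; ring)).symm
  have hy3x3 : EqOn y3 x3 (Ici 0) := fun t (ht : 0 ≤ t) => by
    rw [hy3, derivWithin_eq_deriv_of_eqOn hy2x2 ht (uniqueDiffOn_Ici 0 t ht) (hx2d t),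
      hy2x2 ht, sub_sub]
    exact (eq_of_eq_rate_mul (hpos2 t ht).ne' ha23 (hode2 t ht)).symm
  have hχ3x3 : EqOn χ3 x3 (Ici 0) := fun t (ht : 0 ≤ t) => by
    rw [hχ3]
    refine add_integral_eq_of_eqOn_deriv hx3 fun τ hτ => ?_
    have hτ : 0 ≤ τ := uIcc_subset_Ici_of_le ht hτ
    simp only [hy2x2 hτ, hy3x3 hτ, hode3 τ hτ]
  have hχ2x2 : EqOn χ2 x2 (Ici 0) := fun t (ht : 0 ≤ t) => by
    rw [hχ2]
    refine add_integral_eq_of_eqOn_deriv hx2 fun τ hτ => ?_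
    have hτ : 0 ≤ τ := uIcc_subset_Ici_of_le ht hτ
    simp only [hy2x2 hτ, hχ3x3 hτ, hode2 τ hτ]
  refine ⟨?_, fun t ht => (hy2x2 ht).symm, hx2d.differentiableOn.congr hy2x2, fun t ht => ?_⟩
  · have hrate : Differentiable ℝ
        (fun t => b1 * x1 t + (a11 * x1 t + a12 * x2 t + a13 * x3 t) * x1 t) := by
      fun_prop
    exact hrate.differentiableOn.congr hode1
  · rw [hode1 t ht, ha13, hχ2x2 ht]
    ring

/-- (Reduction from three species to one when `a13 = 0`.) Suppose
`a13 = 0`, `a12 ≠ 0`, `a23 ≠ 0`, and `x1, x2, x3` are continuously differentiable, positive,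
solutions of the 3-species GLV system on `[0,∞)`. With `y2, y3, χ3, χ2` as defined below,
`x1` is twice differentiable on `[0,∞)`, `x2 = y2` on `[0,∞)`, `y2` is differentiable, and
`x1` satisfies the single reduced equation `ẋ1 = b1·x1 + (a11·x1 + a12·χ2)·x1` on `[0,∞)`. -/
theorem glv3_reduction_to_one
    (b1 b2 b3 a11 a12 a13 a21 a22 a23 a31 a32 a33 : ℝ)
    (ha13 : a13 = 0) (ha12 : a12 ≠ 0) (ha23 : a23 ≠ 0)
    (x1 x2 x3 : ℝ → ℝ)
    (hx1 : ContDiff ℝ 1 x1) (hx2 : ContDiff ℝ 1 x2) (hx3 : ContDiff ℝ 1 x3)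
    (hpos1 : ∀ t : ℝ, 0 ≤ t → 0 < x1 t)
    (hpos2 : ∀ t : ℝ, 0 ≤ t → 0 < x2 t)
    (hpos3 : ∀ t : ℝ, 0 ≤ t → 0 < x3 t)
    (hode1 : ∀ t : ℝ, 0 ≤ t →
      deriv x1 t = b1 * x1 t + (a11 * x1 t + a12 * x2 t + a13 * x3 t) * x1 t)
    (hode2 : ∀ t : ℝ, 0 ≤ t →
      deriv x2 t = b2 * x2 t + (a21 * x1 t + a22 * x2 t + a23 * x3 t) * x2 t)
    (hode3 : ∀ t : ℝ, 0 ≤ t →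
      deriv x3 t = b3 * x3 t + (a31 * x1 t + a32 * x2 t + a33 * x3 t) * x3 t)
    (y2 y3 χ3 χ2 : ℝ → ℝ)
    (hy2 : ∀ t : ℝ, y2 t = (1 / a12) * ((deriv x1 t - b1 * x1 t) / x1 t - a11 * x1 t))
    (hy3 : ∀ t : ℝ, y3 t = (1 / a23) *
      ((derivWithin y2 (Set.Ici 0) t - b2 * y2 t) / y2 t - a21 * x1 t - a22 * y2 t))
    (hχ3 : ∀ t : ℝ, χ3 t = x3 0 + ∫ τ in (0:ℝ)..t,
      (b3 * y3 τ + (a31 * x1 τ + a32 * y2 τ + a33 * y3 τ) * y3 τ))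
    (hχ2 : ∀ t : ℝ, χ2 t = x2 0 + ∫ τ in (0:ℝ)..t,
      (b2 * y2 τ + (a21 * x1 τ + a22 * y2 τ + a23 * χ3 τ) * y2 τ)) :
    DifferentiableOn ℝ (deriv x1) (Set.Ici 0) ∧
    (∀ t : ℝ, 0 ≤ t → x2 t = y2 t) ∧
    DifferentiableOn ℝ y2 (Set.Ici 0) ∧
    (∀ t : ℝ, 0 ≤ t →
      deriv x1 t = b1 * x1 t + (a11 * x1 t + a12 * χ2 t) * x1 t) :=
  glv3_reduction_to_one_general b1 b2 b3 a11 a12 a13 a21 a22 a23 a31 a32 a33 ha13 ha12 ha23 x1 x2 x3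
    hx1 hx2 hx3 hpos1 hpos2 hode1 hode2 hode3 y2 y3 χ3 χ2 hy2 hy3 hχ3 hχ2
end

section
/- (Reduction from S to S−2 equations.) Let S ≥ 3 and suppose A₁S ≠ 0, A_{S−2,S−1} ≠ 0, A_{S−2,S} = 0, and x₁, …, x_S : ℝ → ℝ are continuously differentiable and solve the S-species GLV system on [0,∞) with xᵢ(t) > 0 for all i and all t ≥ 0. Define y_S(t) := (1/A₁S)·((ẋ₁(t) − b₁·x₁(t))/x₁(t) − Σ_{j=1}^{S−1} A₁ⱼ·xⱼ(t)), χ_S(t) := x_S(0) + ∫₀ᵗ [b_S·y_S + (Σ_{j=1}^{S−1} A_{Sj}·xⱼ + A_{SS}·y_S)·y_S] dτ, y_{S−1}(t) := (1/A_{S−2,S−1})·((ẋ_{S−2}(t) − b_{S−2}·x_{S−2}(t))/x_{S−2}(t) − Σ_{j=1}^{S−2} A_{S−2,j}·xⱼ(t)), and χ_{S−1}(t) := x_{S−1}(0) + ∫₀ᵗ [b_{S−1}·y_{S−1} + (Σ_{j=1}^{S−2} A_{S−1,j}·xⱼ + A_{S−1,S−1}·y_{S−1} + A_{S−1,S}·χ_S)·y_{S−1}]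 dτ. Then x_{S−1} = y_{S−1} = χ_{S−1} on [0,∞), x_S = χ_S on [0,∞), and for every i = 1, …, S−2 and t ≥ 0: ẋᵢ(t) = bᵢ·xᵢ(t) + (Σ_{j=1}^{S−2} Aᵢⱼ·xⱼ(t) + A_{i,S−1}·χ_{S−1}(t) + A_{iS}·χ_S(t))·xᵢ(t). -/
/-- (Reduction from `S` to `S−2` equations.) For the `S`-species GLV system
(`S ≥ 3`) with `A 1 S ≠ 0`, `A (S-2) (S-1) ≠ 0`, `A (S-2) S = 0`, and positive continuously
differentiable solutions on `[0,∞)`, the memory variables `y_S, χ_S, y_{S−1}, χ_{S−1}`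
recover `x (S-1)` and `x S`, and each of the first `S−2` species satisfies the reduced
equation in which `x (S-1)` and `x S` are replaced by `χ_{S−1}` and `χ_S`. -/
theorem glvS_reduction_to_Sm2
    (S : ℕ) (hS : 3 ≤ S) (b : ℕ → ℝ) (A : ℕ → ℕ → ℝ)
    (hA1S : A 1 S ≠ 0) (hASm2Sm1 : A (S - 2) (S - 1) ≠ 0) (hASm2S : A (S - 2) S = 0)
    (x : ℕ → ℝ → ℝ)
    (hdiff : ∀ i ∈ Finset.Icc 1 S, ContDiff ℝ 1 (x i))
    (hpos : ∀ i ∈ Finset.Icc 1 S, ∀ t : ℝ, 0 ≤ t → 0 < x i t)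
    (hode : ∀ i ∈ Finset.Icc 1 S, ∀ t : ℝ, 0 ≤ t →
      deriv (x i) t = b i * x i t + (∑ j ∈ Finset.Icc 1 S, A i j * x j t) * x i t)
    (yS χS ySm1 χSm1 : ℝ → ℝ)
    (hyS : ∀ t : ℝ, yS t = (1 / A 1 S) * ((deriv (x 1) t - b 1 * x 1 t) / x 1 t
      - ∑ j ∈ Finset.Icc 1 (S - 1), A 1 j * x j t))
    (hχS : ∀ t : ℝ, χS t = x S 0 + ∫ τ in (0:ℝ)..t,
      (b S * yS τ + ((∑ j ∈ Finset.Icc 1 (S - 1), A S j * x j τ) + A S S * yS τ) * yS τ))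
    (hySm1 : ∀ t : ℝ, ySm1 t = (1 / A (S - 2) (S - 1)) *
      ((deriv (x (S - 2)) t - b (S - 2) * x (S - 2) t) / x (S - 2) t
        - ∑ j ∈ Finset.Icc 1 (S - 2), A (S - 2) j * x j t))
    (hχSm1 : ∀ t : ℝ, χSm1 t = x (S - 1) 0 + ∫ τ in (0:ℝ)..t,
      (b (S - 1) * ySm1 τ
        + ((∑ j ∈ Finset.Icc 1 (S - 2), A (S - 1) j * x j τ)
            + A (S - 1) (S - 1) * ySm1 τ + A (S - 1) S * χS τ) * ySm1 τ)) :
    (∀ t : ℝ, 0 ≤ t → x (S - 1) t = ySm1 t) ∧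
    (∀ t : ℝ, 0 ≤ t → x (S - 1) t = χSm1 t) ∧
    (∀ t : ℝ, 0 ≤ t → x S t = χS t) ∧
    (∀ i ∈ Finset.Icc 1 (S - 2), ∀ t : ℝ, 0 ≤ t →
      deriv (x i) t
        = b i * x i t
          + ((∑ j ∈ Finset.Icc 1 (S - 2), A i j * x j t)
              + A i (S - 1) * χSm1 t + A i S * χS t) * x i t) := by
  have hmem1 : (1:ℕ) ∈ Finset.Icc 1 S := Finset.mem_Icc.2 ⟨by omega, by omega⟩
  have hmemS : S ∈ Finset.Icc 1 S := Finset.mem_Icc.2 ⟨by omega, by omega⟩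
  have hmemSm1 : S - 1 ∈ Finset.Icc 1 S := Finset.mem_Icc.2 ⟨by omega, by omega⟩
  have hmemSm2 : S - 2 ∈ Finset.Icc 1 S := Finset.mem_Icc.2 ⟨by omega, by omega⟩
  have hS1 : S - 1 + 1 = S := by omega
  have hS2 : S - 2 + 1 = S - 1 := by omega
  have hsplitS : ∀ (f : ℕ → ℝ), (∑ j ∈ Finset.Icc 1 S, f j)
      = (∑ j ∈ Finset.Icc 1 (S-1), f j) + f S := by
    intro f
    have h := Finset.sum_Icc_succ_top (a := 1) (b := S - 1) (f := f) (by omega)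
    rw [hS1] at h
    exact h
  have hsplitSm1 : ∀ (f : ℕ → ℝ), (∑ j ∈ Finset.Icc 1 (S-1), f j)
      = (∑ j ∈ Finset.Icc 1 (S-2), f j) + f (S-1) := by
    intro f
    have h := Finset.sum_Icc_succ_top (a := 1) (b := S - 2) (f := f) (by omega)
    rw [hS2] at h
    exact h
  -- yS recovers x S
  have hyS_eq : ∀ t : ℝ, 0 ≤ t → yS t = x S t := by
    intro t ht
    have hx1 := hpos 1 hmem1 t ht
    rw [hyS, hode 1 hmem1 t ht, hsplitS (fun j => A 1 j * x j t)]
    field_simp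
    ring
  -- ySm1 recovers x (S-1)
  have hySm1_eq : ∀ t : ℝ, 0 ≤ t → ySm1 t = x (S-1) t := by
    intro t ht
    have hx2 := hpos (S-2) hmemSm2 t ht
    rw [hySm1, hode (S-2) hmemSm2 t ht, hsplitS (fun j => A (S-2) j * x j t),
      hsplitSm1 (fun j => A (S-2) j * x j t), hASm2S]
    field_simp
    ring
  -- χS recovers x S
  have hχS_eq : ∀ t : ℝ, 0 ≤ t → x S t = χS t := by
    intro t ht
    have hcongr : (∫ τ in (0:ℝ)..t,
        (b S * yS τ + ((∑ j ∈ Finset.Icc 1 (S - 1), A S j * x j τ) + A S S * yS τ) * yS τ))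
        = ∫ τ in (0:ℝ)..t, deriv (x S) τ := by
      apply intervalIntegral.integral_congr
      intro τ hτ
      rw [Set.uIcc_of_le ht] at hτ
      have hτ0 : (0:ℝ) ≤ τ := hτ.1
      simp only [hyS_eq τ hτ0, hode S hmemS τ hτ0, hsplitS (fun j => A S j * x j τ)]
    have hftc : (∫ τ in (0:ℝ)..t, deriv (x S) τ) = x S t - x S 0 := by
      apply intervalIntegral.integral_deriv_eq_sub
      · intro τ _
        exact ((hdiff S hmemS).differentiable one_ne_zero).differentiableAt
      · exact ((hdiff S hmemS).continuous_deriv le_rfl).intervalIntegrable 0 t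
    rw [hχS, hcongr, hftc]
    ring
  -- χSm1 recovers x (S-1)
  have hχSm1_eq : ∀ t : ℝ, 0 ≤ t → x (S-1) t = χSm1 t := by
    intro t ht
    have hcongr : (∫ τ in (0:ℝ)..t,
        (b (S - 1) * ySm1 τ
          + ((∑ j ∈ Finset.Icc 1 (S - 2), A (S - 1) j * x j τ)
              + A (S - 1) (S - 1) * ySm1 τ + A (S - 1) S * χS τ) * ySm1 τ))
        = ∫ τ in (0:ℝ)..t, deriv (x (S-1)) τ := by
      apply intervalIntegral.integral_congr
      intro τ hτ
      rw [Set.uIcc_of_le ht] at hτ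
      have hτ0 : (0:ℝ) ≤ τ := hτ.1
      simp only [hySm1_eq τ hτ0, ← hχS_eq τ hτ0, hode (S-1) hmemSm1 τ hτ0,
        hsplitS (fun j => A (S-1) j * x j τ), hsplitSm1 (fun j => A (S-1) j * x j τ)]
    have hftc : (∫ τ in (0:ℝ)..t, deriv (x (S-1)) τ) = x (S-1) t - x (S-1) 0 := by
      apply intervalIntegral.integral_deriv_eq_sub
      · intro τ _
        exact ((hdiff (S-1) hmemSm1).differentiable one_ne_zero).differentiableAt
      · exact ((hdiff (S-1) hmemSm1).continuous_deriv le_rfl).intervalIntegrable 0 t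
    rw [hχSm1, hcongr, hftc]
    ring
  refine ⟨fun t ht => (hySm1_eq t ht).symm, hχSm1_eq, hχS_eq, ?_⟩
  intro i hi t ht
  have hiS : i ∈ Finset.Icc 1 S := by
    rw [Finset.mem_Icc] at hi ⊢
    omega
  rw [hode i hiS t ht, hsplitS (fun j => A i j * x j t), hsplitSm1 (fun j => A i j * x j t),
    ← hχS_eq t ht, ← hχSm1_eq t ht]
end
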